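/- Let K be a field of characteristic zero, a ∈ K nonzero, and let f ∈ K⟦t⟧ have t-adic valuation at least m (i.e., its first m coefficients vanish). Then the unique solution y of t(t−4a)y' + (t−2a)y = f also has t-adic valuation at least m. -/

import Mathlib

/-!
Comparing coefficients of `t^k` in `t(t-4a)y' + (t-2a)y` gives `k y_{k-1} - 2a(2k+1) y_k`.
In characteristic zero `2a(2k+1) ≠ 0`, so if `f_0 = ⋯ = f_k = 0` then induction on `k`
forces `y_0 = ⋯ = y_k = 0`.
-/

open PowerSeries

section
variable {R : Type*} [CommRing R]

theorem coeff_X_mul_derivative (y : R⟦X⟧) (k : ℕ) :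
    coeff k (X * d⁄dX R y) = k * coeff k y := by
  rcases k with _ | k
  · simp
  · rw [coeff_succ_X_mul, coeff_derivative, mul_comm, Nat.cast_succ]

noncomputable def psiPlus (a : R) (y : R⟦X⟧) : R⟦X⟧ :=
  X * (X - C (4 * a)) * d⁄dX R y + (X - C (2 * a)) * y

theorem psiPlus_eq (a : R) (y : R⟦X⟧) :
    psiPlus a y = X * (X * d⁄dX R y + y) - (C (4 * a) * (X * d⁄dX R y) + C (2 * a) * y) := by
  rw [psiPlus]
  ring

-- At `k = 0` the truncated `k - 1` is harmless: its coefficient is multiplied by `k`.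
theorem coeff_psiPlus (a : R) (y : R⟦X⟧) (k : ℕ) :
    coeff k (psiPlus a y) = k * coeff (k - 1) y - 2 * a * (2 * k + 1) * coeff k y := by
  rw [psiPlus_eq, map_sub, map_add, coeff_C_mul, coeff_C_mul, coeff_X_mul_derivative]
  rcases k with _ | k
  · simp
  · rw [coeff_succ_X_mul, map_add, coeff_X_mul_derivative, Nat.add_sub_cancel, Nat.cast_succ]
    ring
end

theorem coeff_eq_zero_of_coeff_psiPlus_eq_zero {R : Type*} [CommRing R] [IsDomain R] [CharZero R]
    {a : R} (ha : a ≠ 0) {y : R⟦X⟧} {k : ℕ} (hprev : (k : R) * coeff (k - 1) y = 0)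
    (hk : coeff k (psiPlus a y) = 0) : coeff k y = 0 := by
  rw [coeff_psiPlus, hprev, zero_sub, neg_eq_zero] at hk
  have hodd : (2 * k + 1 : R) ≠ 0 := by exact_mod_cast (2 * k).succ_ne_zero
  exact (mul_eq_zero.mp hk).resolve_left (mul_ne_zero (mul_ne_zero two_ne_zero ha) hodd)

/-- If `f` has `t`-adic valuation at least `m`, then so does the solution `y` of
`t(t-4a)y' + (t-2a)y = f`. -/
theorem psi_plus_preserves_t_adic_valuation
    {K : Type*} [Field K] [CharZero K] (a : K) (ha : a ≠ 0) (m : ℕ)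
    (f y : PowerSeries K)
    (hy : X * (X - C (4 * a)) * d⁄dX K y + (X - C (2 * a)) * y = f)
    (hf : ∀ k < m, coeff k f = 0) :
    ∀ k < m, coeff k y = 0 := by
  have hpsi : psiPlus a y = f := hy
  intro k hk
  induction k with
  | zero => exact coeff_eq_zero_of_coeff_psiPlus_eq_zero ha (by simp) (hpsi ▸ hf 0 hk)
  | succ k ih =>
    refine coeff_eq_zero_of_coeff_psiPlus_eq_zero ha ?_ (hpsi ▸ hf (k + 1) hk)
    rw [Nat.add_sub_cancel, ih (by omega), mul_zero]
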